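/- Let p be a prime, q = p^a a prime power, m ≥ 2, and let V = GF(q)^m, so v = q^m. Let G be a group of permutations of V consisting of affine transformations x ↦ g(x) + u (g a p-semilinear invertible map on V fixing 0, u ∈ V) that contains all translations, and suppose the stabilizer G_0 of 0 in G contains SL(m,q), acting naturally on V, as a normal subgroup. Then there is no non-trivial Steiner 4-design and no non-trivial Steiner 5-design on the point set V admitting G as a block-transitive group of automorphisms. -/

import Mathlib

/-!
Write `V = K^m` and `q = |K|`. A transvection fixing a coordinate hyperplane `H` pointwise
stabilises every block that meets `H` in `t` points; together with the translations by vectors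
of `H` and diagonal matrices of determinant one this shows that such a block is contained in `H`,
as it cannot be all of `V`. So if `t ≤ q^r` with `r + 2 ≤ t` and `r < m`, the block through `t`
points of an `r`-dimensional coordinate subspace `W` lies in `W`, while the block through
`0, e₁, …, e_{r+1}` contains `r + 2` affinely independent points. No semilinear affine map
carries the first block onto the second, contradicting block-transitivity.

The remaining parameters have `v ∈ {4, 8, 9, 16}`, and integrality of the numbers
`C(v-s, t-s) / C(k-s, t-s)` of blocks through `s` points leaves only a `5-(16,6,1)` design over
`GF(4)`. There the block through the x-axis and `(0, 1)` consists of the x-axis and two points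
of the line `y = 1`, hence every block is a line plus two points. The block through a five-point
set whose only collinear triple lies on the x-axis must then contain the x-axis and `(0, 1)`, so
it is that first block; a suitable fifth point outside it gives a contradiction.
-/

/-- The image of `SL(m,K)` in the symmetric group on `V = K^m`, i.e. the permutations of `V`
induced by matrices of determinant one. -/
def slPerm (m : ℕ) (K : Type*) [Field K] : Set (Equiv.Perm (Fin m → K)) :=
  {g | ∃ M : Matrix.SpecialLinearGroup (Fin m) K,
    ∀ x : Fin m → K, g x = (M : Matrix (Fin m) (Fin m) K).mulVec x}

open Finset Matrix Module

namespace Matrix.SpecialLinearGroup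

variable {K : Type*} [Field K] {n : Type*} [Fintype n] [DecidableEq n]

def toPerm (M : SpecialLinearGroup n K) : Equiv.Perm (n → K) :=
  (toLin' M).toEquiv

theorem toPerm_apply (M : SpecialLinearGroup n K) (x : n → K) :
    M.toPerm x = (M : Matrix n n K) *ᵥ x :=
  rfl

theorem toPerm_mem_slPerm {m : ℕ} (M : SpecialLinearGroup (Fin m) K) : M.toPerm ∈ slPerm m K :=
  ⟨M, fun _ => rfl⟩

def shear (j : n) (w : n → K) (hw : w j = 0) : SpecialLinearGroup n K :=
  ⟨1 + replicateCol Unit w * replicateRow Unit (Pi.single j (1 : K)), by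
    rw [det_one_add_replicateCol_mul_replicateRow, single_dotProduct, one_mul, hw, add_zero]⟩

theorem shear_toPerm_apply (j : n) (w : n → K) (hw : w j = 0) (z : n → K) :
    (shear j w hw).toPerm z = z + z j • w := by
  rw [toPerm_apply, shear, coe_mk, add_mulVec, one_mulVec, ← mulVec_mulVec]
  ext i
  simp [-mulVec_mulVec, mulVec, mul_comm]

def dilation (j j' : n) (a : K) (ha : a ≠ 0) : SpecialLinearGroup n K :=
  ⟨diagonal (Pi.mulSingle j a * Pi.mulSingle j' a⁻¹), by
    rw [det_diagonal]
    simp only [Pi.mul_apply]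
    rw [prod_mul_distrib, prod_pi_mulSingle', prod_pi_mulSingle', if_pos (mem_univ _),
      if_pos (mem_univ _), mul_inv_cancel₀ ha]⟩

theorem dilation_toPerm_apply (j j' : n) (a : K) (ha : a ≠ 0) (z : n → K) (i : n) :
    (dilation j j' a ha).toPerm z i =
      (Pi.mulSingle j a : n → K) i * (Pi.mulSingle j' a⁻¹ : n → K) i * z i := by
  rw [toPerm_apply, dilation, coe_mk, mulVec_diagonal, Pi.mul_apply]

end Matrix.SpecialLinearGroup

section Design

variable {α : Type*} [DecidableEq α]

def IsSteinerSystem (t : ℕ) (B : Finset (Finset α)) : Prop :=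
  ∀ T : Finset α, T.card = t → (B.filter (fun b => T ⊆ b)).card = 1

def PreservesBlocks (G : Subgroup (Equiv.Perm α)) (B : Finset (Finset α)) : Prop :=
  ∀ g ∈ G, ∀ b ∈ B, b.image (⇑g) ∈ B

def IsBlockTransitive (G : Subgroup (Equiv.Perm α)) (B : Finset (Finset α)) : Prop :=
  ∀ b₁ ∈ B, ∀ b₂ ∈ B, ∃ g ∈ G, b₁.image g = b₂

namespace IsSteinerSystem

variable {t : ℕ} {B : Finset (Finset α)} (hB : IsSteinerSystem t B)
include hB

theorem exists_mem_superset {T : Finset α} (hT : T.card = t) : ∃ b ∈ B, T ⊆ b := by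
  obtain ⟨b, hb⟩ := card_pos.1 (hB T hT ▸ Nat.one_pos)
  exact ⟨b, (mem_filter.1 hb).1, (mem_filter.1 hb).2⟩

theorem eq_of_superset {T b₁ b₂ : Finset α} (hT : T.card = t) (hb₁ : b₁ ∈ B) (hb₂ : b₂ ∈ B)
    (hTb₁ : T ⊆ b₁) (hTb₂ : T ⊆ b₂) : b₁ = b₂ :=
  card_le_one.1 (hB T hT).le _ (mem_filter.2 ⟨hb₁, hTb₁⟩) _ (mem_filter.2 ⟨hb₂, hTb₂⟩)

theorem apply_mem_of_image_subset {G : Subgroup (Equiv.Perm α)} (hG : PreservesBlocks G B)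
    {g : Equiv.Perm α} (hg : g ∈ G) {b S : Finset α} (hb : b ∈ B) (hSb : S ⊆ b)
    (hS : S.card = t) (hgS : S.image g ⊆ b) {z : α} (hz : z ∈ b) : g z ∈ b := by
  have hgb : b.image g = b :=
    hB.eq_of_superset (by rw [card_image_of_injective _ g.injective, hS]) (hG g hg b hb) hb
      (image_subset_image hSb) hgS
  exact hgb ▸ mem_image_of_mem g hz

theorem card_filter_superset_mul_choose [Fintype α] {k : ℕ} (hk : ∀ b ∈ B, b.card = k)
    (F : Finset α) (hF : F.card ≤ t) :
    (B.filter (F ⊆ ·)).card * (k - F.card).choose (t - F.card)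
      = (Fintype.card α - F.card).choose (t - F.card) := by
  -- count the pairs `T ⊆ b` with `F ⊆ T` and `T.card = t` in two ways
  have hdouble := card_mul_eq_card_mul (fun b T => T ⊆ b)
    (s := B.filter (F ⊆ ·)) (t := (univ.powersetCard t).filter (F ⊆ ·))
    (m := (k - F.card).choose (t - F.card)) (n := 1) ?_ ?_
  · rwa [mul_one, card_filter_powersetCard_subset _ _ _ (subset_univ F) hF, card_univ]
      at hdouble
  · intro b hb
    rw [mem_filter] at hb
    rw [← hk b hb.1, ← card_filter_powersetCard_subset F b t hb.2 hF, bipartiteAbove,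
      filter_filter]
    congr 1
    ext T
    simp only [mem_filter, mem_powersetCard, subset_univ, true_and]
    tauto
  · intro T hT
    rw [mem_filter, mem_powersetCard] at hT
    rw [bipartiteBelow, filter_filter, ← hB T hT.1.2]
    congr 1
    ext b
    simp only [mem_filter]
    exact and_congr_right fun _ => ⟨fun h => h.2, fun h => ⟨hT.2.trans h, h⟩⟩

theorem choose_dvd [Fintype α] {k : ℕ} (hk : ∀ b ∈ B, b.card = k) {s : ℕ} (hst : s ≤ t)
    (hsv : s ≤ Fintype.card α) :
    (k - s).choose (t - s) ∣ (Fintype.card α - s).choose (t - s) := by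
  obtain ⟨F, -, rfl⟩ := exists_subset_card_eq (show s ≤ (univ : Finset α).card by rwa [card_univ])
  exact Dvd.intro_left _ (hB.card_filter_superset_mul_choose hk F hst)

end IsSteinerSystem

end Design

section Coordinates

variable {K : Type*} [Field K] {ι : Type*}

noncomputable def coordSubspace (R : Finset ι) : Submodule K (ι → K) :=
  LinearMap.range (Function.ExtendByZero.linearMap K ((↑) : R → ι))

theorem mem_coordSubspace {R : Finset ι} {x : ι → K} :
    x ∈ coordSubspace R ↔ ∀ j ∉ R, x j = 0 := by
  have extend_of_notMem (y : R → K) {j : ι} (hj : j ∉ R) :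
      Function.extend Subtype.val y 0 j = 0 :=
    Function.extend_apply' _ _ _ fun ⟨i, hi⟩ => hj (hi ▸ i.2)
  constructor
  · rintro ⟨y, rfl⟩ j hj
    exact extend_of_notMem y hj
  · intro hx
    refine ⟨fun i => x i, funext fun j => ?_⟩
    show Function.extend Subtype.val (fun i : R => x i) 0 j = x j
    by_cases hj : j ∈ R
    · exact Subtype.val_injective.extend_apply _ _ ⟨j, hj⟩
    · exact (extend_of_notMem _ hj).trans (hx j hj).symm

theorem finrank_coordSubspace_le (R : Finset ι) :
    finrank K (coordSubspace (K := K) R) ≤ R.card :=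
  (LinearMap.finrank_range_le _).trans (by simp)

theorem exists_card_eq_subset_coordSubspace [Fintype ι] [DecidableEq ι] [Fintype K]
    [DecidableEq K] (R : Finset ι) {n : ℕ} (hn : n ≤ Fintype.card K ^ R.card) :
    ∃ S : Finset (ι → K), S.card = n ∧ ∀ x ∈ S, x ∈ coordSubspace R := by
  set e := Function.ExtendByZero.linearMap K ((↑) : R → ι)
  have he : Function.Injective e :=
    Function.extend_injective Subtype.val_injective (0 : ι → K)
  have hcard : (univ.image e).card = Fintype.card K ^ R.card := by
    rw [card_image_of_injective _ he, card_univ, Fintype.card_fun, Fintype.card_coe]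
  obtain ⟨S, hS, rfl⟩ := exists_subset_card_eq (hcard ▸ hn)
  refine ⟨S, rfl, fun x hx => ?_⟩
  obtain ⟨y, -, rfl⟩ := mem_image.1 (hS hx)
  exact ⟨y, rfl⟩

theorem card_le_finrank_of_semilinear [Fintype ι] [DecidableEq ι] {σ : K ≃+* K}
    {f : (ι → K) ≃+ (ι → K)} (hf : ∀ (c : K) (x : ι → K), f (c • x) = σ c • f x)
    {W : Submodule K (ι → K)} {R : Finset ι} (hR : ∀ i ∈ R, f.symm (Pi.single i 1) ∈ W) :
    R.card ≤ finrank K W := by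
  set v : R → ι → K := f.symm.toAddMonoidHom ∘ fun i => Pi.single (i : ι) 1
  have he : LinearIndependent K fun i : R => (Pi.single (i : ι) 1 : ι → K) :=
    (Pi.linearIndependent_single_one ι K).comp _ Subtype.val_injective
  have hf' (c : K) (x : ι → K) : f.symm (σ c • x) = c • f.symm x := by
    rw [f.symm_apply_eq, hf, f.apply_symm_apply]
  have hv : LinearIndependent K v :=
    he.map_of_injective_injective σ f.symm.toAddMonoidHom (fun c hc => σ.map_eq_zero_iff.1 hc)
      (fun x hx => f.symm.map_eq_zero_iff.1 hx) hf'
  calc R.card = finrank K (Submodule.span K (Set.range v)) := by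
        rw [finrank_span_eq_card hv, Fintype.card_coe]
    _ ≤ finrank K W := Submodule.finrank_mono <| Submodule.span_le.2 <| by
        rintro _ ⟨i, rfl⟩
        exact hR i i.2

end Coordinates

section Affine

variable {K : Type*} [Field K] {ι : Type*}

def IsSemilinearAffine (g : Equiv.Perm (ι → K)) : Prop :=
  ∃ (σ : K ≃+* K) (f : (ι → K) ≃+ (ι → K)) (u : ι → K),
    (∀ (c : K) (x : ι → K), f (c • x) = σ c • f x) ∧ ∀ x : ι → K, g x = f x + u

theorem IsSemilinearAffine.card_le_finrank [Fintype ι] [DecidableEq ι] [DecidableEq K]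
    {g : Equiv.Perm (ι → K)} (hg : IsSemilinearAffine g) {W : Submodule K (ι → K)}
    {b : Finset (ι → K)} (hbW : ∀ x ∈ b, x ∈ W) {R : Finset ι} (h0 : 0 ∈ b.image g)
    (hR : ∀ i ∈ R, Pi.single i 1 ∈ b.image g) : R.card ≤ finrank K W := by
  obtain ⟨σ, f, u, hf, hgfu⟩ := hg
  obtain ⟨x₀, hx₀, hgx₀⟩ := mem_image.1 h0
  refine card_le_finrank_of_semilinear hf fun i hi => ?_
  obtain ⟨x, hx, hgx⟩ := mem_image.1 (hR i hi)
  have hsymm : f.symm (Pi.single i 1) = x - x₀ := by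
    rw [f.symm_apply_eq, map_sub, ← hgx, ← sub_zero (g x), ← hgx₀, hgfu, hgfu]
    abel
  exact hsymm ▸ W.sub_mem (hbW x hx) (hbW x₀ hx₀)

end Affine

section Escape

variable {K : Type*} [Field K] [DecidableEq K] {m t : ℕ}
  {G : Subgroup (Equiv.Perm (Fin m → K))} {B : Finset (Finset (Fin m → K))}

open SpecialLinearGroup

namespace IsSteinerSystem

variable (hB : IsSteinerSystem t B) (hG : PreservesBlocks G B)
include hB hG

theorem add_smul_mem (hSL : ∀ s ∈ slPerm m K, s ∈ G) {b T : Finset (Fin m → K)} (hb : b ∈ B)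
    (hTb : T ⊆ b) (hT : T.card = t) {j : Fin m} (hTj : ∀ x ∈ T, x j = 0) {z : Fin m → K}
    (hz : z ∈ b) {w : Fin m → K} (hw : w j = 0) : z + z j • w ∈ b := by
  have hfix : T.image (shear j w hw).toPerm ⊆ b := image_subset_iff.2 fun x hx => by
    simpa [shear_toPerm_apply, hTj x hx] using hTb hx
  simpa [shear_toPerm_apply] using
    hB.apply_mem_of_image_subset hG (hSL _ (toPerm_mem_slPerm _)) hb hTb hT hfix hz

theorem mem_of_apply_eq (hSL : ∀ s ∈ slPerm m K, s ∈ G) {b T : Finset (Fin m → K)} (hb : b ∈ B)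
    (hTb : T ⊆ b) (hT : T.card = t) {j : Fin m} (hTj : ∀ x ∈ T, x j = 0) {z : Fin m → K}
    (hz : z ∈ b) (hzj : z j ≠ 0) {x : Fin m → K} (hx : x j = z j) : x ∈ b := by
  have h := hB.add_smul_mem hG hSL hb hTb hT hTj hz (w := (z j)⁻¹ • (x - z)) (by simp [hx])
  rwa [smul_smul, mul_inv_cancel₀ hzj, one_smul, add_sub_cancel] at h

theorem add_mem_of_forall_mem (htransl : ∀ u : Fin m → K, Equiv.addLeft u ∈ G)
    {b T : Finset (Fin m → K)} (hb : b ∈ B) (hT : T.card = t) {j : Fin m}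
    (hTj : ∀ x ∈ T, x j = 0) {c : K} (hc : ∀ x : Fin m → K, x j = c → x ∈ b)
    {w : Fin m → K} (hw : w j = 0) {z : Fin m → K} (hz : z ∈ b) : w + z ∈ b := by
  set T' := T.image (Equiv.addLeft (Pi.single j c))
  have hT'j : ∀ x ∈ T', x j = c := by
    simp only [T', forall_mem_image]
    intro x hx
    simp [hTj x hx]
  refine hB.apply_mem_of_image_subset hG (htransl w) hb (fun x hx => hc x (hT'j x hx))
    (by rw [card_image_of_injective _ (Equiv.injective _), hT])
    (image_subset_iff.2 fun x hx => hc _ (by simp [hw, hT'j x hx])) hz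

theorem eq_univ_of_subset_hyperplane [Fintype K] (hm : 2 ≤ m) (ht : 0 < t)
    (htransl : ∀ u : Fin m → K, Equiv.addLeft u ∈ G) (hSL : ∀ s ∈ slPerm m K, s ∈ G)
    {b T : Finset (Fin m → K)} (hb : b ∈ B) (hTb : T ⊆ b) (hT : T.card = t) {j : Fin m}
    (hTj : ∀ x ∈ T, x j = 0) {y : Fin m → K} (hy : y ∈ b) (hyj : y j ≠ 0) : b = univ := by
  have hrow := fun x => hB.mem_of_apply_eq hG hSL hb hTb hT hTj hy hyj (x := x)
  obtain ⟨s, hs⟩ := card_pos.1 (hT ▸ ht)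
  have hhyperplane (x : Fin m → K) (hx : x j = 0) : x ∈ b := by
    simpa using hB.add_mem_of_forall_mem hG htransl hb hT hTj hrow (w := x - s)
      (by simp [hx, hTj s hs]) (hTb hs)
  obtain ⟨j', hj'⟩ := Fintype.exists_ne_of_one_lt_card (by rw [Fintype.card_fin]; omega) j
  refine eq_univ_of_forall fun x => ?_
  by_cases hx : x j = 0
  · exact hhyperplane x hx
  set a := x j / y j
  have ha : a ≠ 0 := div_ne_zero hx hyj
  have hd := hB.apply_mem_of_image_subset hG (hSL _ (toPerm_mem_slPerm (dilation j j' a ha)))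
    hb hTb hT (image_subset_iff.2 fun z hz =>
      hhyperplane _ (by simp [dilation_toPerm_apply, hTj z hz])) hy
  have hdj : (dilation j j' a ha).toPerm y j = x j := by
    simp [dilation_toPerm_apply, hj', a, div_mul_cancel₀ _ hyj]
  exact hB.mem_of_apply_eq hG hSL hb hTb hT hTj hd (hdj ▸ hx) hdj.symm

theorem apply_eq_zero_of_subset [Fintype K] (hm : 2 ≤ m) (ht : 0 < t)
    (htransl : ∀ u : Fin m → K, Equiv.addLeft u ∈ G) (hSL : ∀ s ∈ slPerm m K, s ∈ G) {k : ℕ}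
    (hk : ∀ b ∈ B, b.card = k) (hkv : k < Fintype.card (Fin m → K)) {b T : Finset (Fin m → K)}
    (hb : b ∈ B) (hTb : T ⊆ b) (hT : T.card = t) {j : Fin m} (hTj : ∀ x ∈ T, x j = 0)
    {x : Fin m → K} (hx : x ∈ b) : x j = 0 := by
  by_contra hxj
  have hbv := hk b hb
  rw [hB.eq_univ_of_subset_hyperplane hG hm ht htransl hSL hb hTb hT hTj hx hxj, card_univ] at hbv
  omega

end IsSteinerSystem

end Escape

namespace IsSteinerSystem

variable {K : Type*} [Field K] [Fintype K] [DecidableEq K] {m t k : ℕ}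
  {G : Subgroup (Equiv.Perm (Fin m → K))} {B : Finset (Finset (Fin m → K))}

theorem false_of_le_pow (hB : IsSteinerSystem t B) (hG : PreservesBlocks G B)
    (hGt : IsBlockTransitive G B) (haffine : ∀ g ∈ G, IsSemilinearAffine g)
    (htransl : ∀ u : Fin m → K, Equiv.addLeft u ∈ G) (hSL : ∀ s ∈ slPerm m K, s ∈ G)
    (hk : ∀ b ∈ B, b.card = k) (htk : t < k) (hkv : k < Fintype.card (Fin m → K))
    (hm : 2 ≤ m) {r : ℕ} (hr : t ≤ Fintype.card K ^ r) (hrt : r + 2 ≤ t) (hrm : r < m) :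
    False := by
  obtain ⟨R', -, hR'⟩ :=
    exists_subset_card_eq (show r + 1 ≤ (univ : Finset (Fin m)).card by simpa using hrm)
  obtain ⟨i, hi⟩ := card_pos.1 (by omega : 0 < R'.card)
  have hR : (R'.erase i).card = r := by rw [card_erase_of_mem hi, hR', Nat.add_sub_cancel]
  obtain ⟨S₂, hS₂, hS₂W⟩ := exists_card_eq_subset_coordSubspace (K := K) (R'.erase i) (hR ▸ hr)
  obtain ⟨b₂, hb₂, hS₂b₂⟩ := hB.exists_mem_superset hS₂
  have hb₂W (x : Fin m → K) (hx : x ∈ b₂) : x ∈ coordSubspace (R'.erase i) :=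
    mem_coordSubspace.2 fun j hj =>
      hB.apply_eq_zero_of_subset hG hm (by omega) htransl hSL hk hkv hb₂ hS₂b₂ hS₂
        (fun y hy => mem_coordSubspace.1 (hS₂W y hy) j hj) hx
  set E : Finset (Fin m → K) := insert 0 (R'.image (Pi.single · 1))
  have hE : E.card = r + 2 := by
    rw [card_insert_of_notMem (by simp [eq_comm]),
      card_image_of_injective _ fun j j' h => by_contra fun hjj' => by
        simpa [Pi.single_eq_of_ne hjj'] using congrFun h j, hR']
  obtain ⟨S₁, hES₁, -, hS₁⟩ :=
    exists_subsuperset_card_eq (subset_univ E) (hE ▸ hrt) (by rw [card_univ]; omega)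
  obtain ⟨b₁, hb₁, hS₁b₁⟩ := hB.exists_mem_superset hS₁
  -- `b₂` lies in an `r`-dimensional subspace, but its image `b₁` contains `0, e_i (i ∈ R')`
  obtain ⟨g, hg, rfl⟩ := hGt b₂ hb₂ b₁ hb₁
  have hEb₁ := hES₁.trans hS₁b₁
  have := (haffine g hg).card_le_finrank hb₂W (hEb₁ (mem_insert_self _ _))
    fun i hi => hEb₁ (mem_insert_of_mem (mem_image_of_mem _ hi))
  have := finrank_coordSubspace_le (K := K) (R'.erase i)
  omega

end IsSteinerSystem

theorem eq_sixteen_and_eq_six_of_choose_dvd {t k v : ℕ} (ht : t = 4 ∨ t = 5) (htk : t < k)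
    (hkv : k < v)
    (hv : v = 4 ∨ v = 8 ∨ v = 9 ∨ v = 16 ∧ t = 5)
    (hdvd : ∀ s ≤ t, (k - s).choose (t - s) ∣ (v - s).choose (t - s)) : v = 16 ∧ k = 6 := by
  revert hdvd
  obtain ⟨rfl | rfl | rfl | rfl, rfl | rfl⟩ :
      (v = 4 ∨ v = 8 ∨ v = 9 ∨ v = 16) ∧ (t = 4 ∨ t = 5) := by
    omega
  all_goals first | omega | interval_cases k <;> decide

theorem exists_le_pow_or_small {q m t : ℕ} (hq : 2 ≤ q) (hm : 2 ≤ m) (ht : t = 4 ∨ t = 5) :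
    (∃ r, t ≤ q ^ r ∧ r + 2 ≤ t ∧ r < m) ∨ q ^ m = 4 ∨ q ^ m = 8 ∨ q ^ m = 9 ∨
      q = 4 ∧ m = 2 ∧ t = 5 := by
  have hpow (r : ℕ) : 2 ^ r ≤ q ^ r := Nat.pow_le_pow_left hq r
  rcases (by omega : m = 2 ∨ m = 3 ∨ 4 ≤ m) with rfl | rfl | hm4
  · by_cases hqt : t ≤ q
    · exact Or.inl ⟨1, by simpa using hqt, by omega, by omega⟩
    · have : q ≤ 4 := by omega
      right
      interval_cases q <;> omega
  · by_cases h : q = 2 ∧ t = 5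
    · obtain ⟨rfl, rfl⟩ := h
      norm_num
    · refine Or.inl ⟨2, ?_, by omega, by omega⟩
      rcases (by omega : 3 ≤ q ∨ t = 4) with hq3 | rfl
      · exact (Nat.pow_le_pow_left hq3 2).trans' (by omega)
      · exact (hpow 2).trans' (by norm_num)
  · refine Or.inl ⟨t - 2, ?_, by omega, by omega⟩
    rcases ht with rfl | rfl
    · exact (hpow 2).trans' (by norm_num)
    · exact (hpow 3).trans' (by norm_num)

theorem exists_ne_ne_of_two_lt_card {α : Type*} [Fintype α] [DecidableEq α]
    (h : 2 < Fintype.card α) (a b : α) : ∃ c : α, c ≠ a ∧ c ≠ b := by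
  obtain ⟨c, -, hc⟩ := exists_mem_notMem_of_card_lt_card (s := {a, b}) (t := univ)
    (card_le_two.trans_lt (by rwa [card_univ]))
  simp only [mem_insert, mem_singleton, not_or] at hc
  exact ⟨c, hc⟩

section Plane

variable {K : Type*} [Field K] [DecidableEq K]

theorem eq_zero_of_collinear {v u : Fin 2 → K} {S : Finset (Fin 2 → K)} (hS : 3 ≤ S.card)
    (hline : ∀ z ∈ S, ∃ c : K, z = c • v + u) (h01 : ∀ z ∈ S, z 1 = 0 ∨ z 1 = 1)
    (hS1 : (S.filter (· 1 ≠ 0)).card ≤ 2) : v 1 = 0 ∧ u 1 = 0 := by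
  obtain ⟨z₁, hz₁, z₂, hz₂, hne, heq⟩ := exists_ne_map_eq_of_card_lt_of_maps_to
    (t := ({0, 1} : Finset K)) (f := fun z => z 1) (card_le_two.trans_lt hS)
    fun z hz => by simpa using h01 z hz
  obtain ⟨c₁, rfl⟩ := hline _ hz₁
  obtain ⟨c₂, rfl⟩ := hline _ hz₂
  have hv : v 1 = 0 := by
    have hc : c₁ - c₂ ≠ 0 := sub_ne_zero.2 fun h => hne (by rw [h])
    have : (c₁ - c₂) * v 1 = 0 := by simpa [sub_mul] using sub_eq_zero.2 heq
    exact (mul_eq_zero.1 this).resolve_left hc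
  refine ⟨hv, by_contra fun hu => ?_⟩
  have : S.filter (· 1 ≠ 0) = S := filter_true_of_mem fun z hz => by
    obtain ⟨c, rfl⟩ := hline z hz
    simpa [hv] using hu
  rw [this] at hS1
  omega

variable [Fintype K]

variable (K) in
def xAxis : Finset (Fin 2 → K) :=
  univ.image fun c => ![c, 0]

theorem mem_xAxis {z : Fin 2 → K} : z ∈ xAxis K ↔ z 1 = 0 := by
  refine ⟨fun hz => ?_, fun hz => mem_image.2 ⟨z 0, mem_univ _, ?_⟩⟩
  · obtain ⟨c, -, rfl⟩ := mem_image.1 hz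
    rfl
  · ext i
    fin_cases i <;> simp [hz]

theorem card_xAxis : (xAxis K).card = Fintype.card K := by
  rw [xAxis, card_image_of_injective _ fun c c' h => by simpa using congrFun h 0, card_univ]

theorem image_xAxis_eq {g : Equiv.Perm (Fin 2 → K)} (hg : IsSemilinearAffine g)
    {S : Finset (Fin 2 → K)} (hS : 3 ≤ (S ∩ (xAxis K).image g).card)
    (h01 : ∀ z ∈ S, z 1 = 0 ∨ z 1 = 1) (hS1 : (S.filter (· 1 ≠ 0)).card ≤ 2) :
    (xAxis K).image g = xAxis K := by
  obtain ⟨σ, f, u, hf, hgfu⟩ := hg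
  have hgx (c : K) : g ![c, 0] = σ c • f ![1, 0] + u := by
    rw [hgfu, ← hf]
    congr
    ext i; fin_cases i <;> simp
  have hline (z : Fin 2 → K) (hz : z ∈ S ∩ (xAxis K).image g) :
      ∃ c : K, z = c • f ![1, 0] + u := by
    obtain ⟨x, hx, rfl⟩ := mem_image.1 (mem_inter.1 hz).2
    obtain ⟨c, -, rfl⟩ := mem_image.1 hx
    exact ⟨σ c, hgx c⟩
  obtain ⟨hv, hu⟩ := eq_zero_of_collinear hS hline (fun z hz => h01 z (mem_inter.1 hz).1)
    ((card_le_card (filter_subset_filter _ inter_subset_left)).trans hS1)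
  refine eq_of_subset_of_card_le (image_subset_iff.2 fun x hx => ?_)
    (card_image_of_injective _ g.injective).ge
  obtain ⟨c, -, rfl⟩ := mem_image.1 hx
  rw [mem_xAxis, hgx]
  simp [hv, hu]

end Plane

namespace IsSteinerSystem

variable {K : Type*} [Field K] [Fintype K] [DecidableEq K]
  {G : Subgroup (Equiv.Perm (Fin 2 → K))} {B : Finset (Finset (Fin 2 → K))}

open SpecialLinearGroup in
theorem exists_insert_insert_xAxis_mem (hB : IsSteinerSystem (Fintype.card K + 1) B)
    (hG : PreservesBlocks G B) (htransl : ∀ u : Fin 2 → K, Equiv.addLeft u ∈ G)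
    (hSL : ∀ s ∈ slPerm 2 K, s ∈ G) (hk : ∀ b ∈ B, b.card = Fintype.card K + 2) :
    ∃ d : K, insert ![d, 1] (insert ![0, 1] (xAxis K)) ∈ B := by
  set T := insert ![0, 1] (xAxis K)
  have hT : T.card = Fintype.card K + 1 := by
    rw [card_insert_of_notMem (by simp [mem_xAxis]), card_xAxis]
  obtain ⟨b, hb, hTb⟩ := hB.exists_mem_superset hT
  obtain ⟨y, hy⟩ := card_eq_one.1 (show (b \ T).card = 1 by
    rw [card_sdiff_of_subset hTb, hk b hb, hT]; omega)
  have hyb : b = insert y T := by rw [← sdiff_union_of_subset hTb, hy, insert_eq]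
  have hyT : y ∉ T := (mem_sdiff.1 (hy ▸ mem_singleton_self y)).2
  -- `h z = z + (z 1 - 1) • e₀` fixes the line `z 1 = 1` pointwise and maps the x-axis to itself
  set h := Equiv.addLeft (-![1, 0]) * (shear (1 : Fin 2) ![(1 : K), 0] (by simp)).toPerm
  have happly (z : Fin 2 → K) : h z = z + (z 1 - 1) • ![1, 0] := by
    simp only [h, Equiv.Perm.mul_apply, shear_toPerm_apply, Equiv.coe_addLeft, sub_smul, one_smul]
    abel
  have hhT : T.image h ⊆ b := image_subset_iff.2 fun z hz => hTb <| by
    rcases mem_insert.1 hz with rfl | hz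
    · simp [happly, T]
    · exact mem_insert_of_mem (mem_xAxis.2 (by simp [happly, mem_xAxis.1 hz]))
  have hhy := hB.apply_mem_of_image_subset hG
    (G.mul_mem (htransl _) (hSL _ (toPerm_mem_slPerm _))) hb hTb hT hhT (hyb ▸ mem_insert_self y T)
  have hy_eq : y = ![y 0, y 1] := by ext i; fin_cases i <;> rfl
  have hy1 : y 1 = 1 := by
    by_contra hy1
    have hy0 : y 1 ≠ 0 := fun h0 => hyT (mem_insert_of_mem (mem_xAxis.2 h0))
    have hhy1 : h y 1 = y 1 := by simp [happly]
    have : h y ∈ b \ T := mem_sdiff.2 ⟨hhy, fun hT' => (mem_insert.1 hT').elim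
      (fun e => hy1 (by simpa [hhy1] using congrFun e 1)) (fun e => hy0 (hhy1 ▸ mem_xAxis.1 e))⟩
    rw [hy, mem_singleton, happly] at this
    simpa [sub_eq_zero, hy1] using congrFun this 0
  refine ⟨y 0, ?_⟩
  have hy' : ![y 0, 1] = y := by rw [← hy1, ← hy_eq]
  rwa [hy', ← hyb]

theorem false_of_card_eq_four (hK : Fintype.card K = 4) (hB : IsSteinerSystem 5 B)
    (hG : PreservesBlocks G B) (hGt : IsBlockTransitive G B)
    (haffine : ∀ g ∈ G, IsSemilinearAffine g) (htransl : ∀ u : Fin 2 → K, Equiv.addLeft u ∈ G)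
    (hSL : ∀ s ∈ slPerm 2 K, s ∈ G) (hk : ∀ b ∈ B, b.card = 6) : False := by
  obtain ⟨d, hb₀⟩ := exists_insert_insert_xAxis_mem (by rwa [hK]) hG htransl hSL
    (by rwa [hK])
  set b₀ := insert ![d, 1] (insert ![0, 1] (xAxis K))
  obtain ⟨c, hc0, hcd⟩ := exists_ne_ne_of_two_lt_card (by omega) 0 d
  obtain ⟨e, he0, he1⟩ := exists_ne_ne_of_two_lt_card (by omega) (0 : K) 1
  -- the only collinear triple in `P` lies on the x-axis, so the block through `P` contains it
  set P : Finset (Fin 2 → K) := {![0, 0], ![1, 0], ![e, 0], ![0, 1], ![c, 1]}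
  have hP : P.card = 5 := by simp [P, he0, he0.symm, he1.symm, hc0.symm]
  obtain ⟨b, hb, hPb⟩ := hB.exists_mem_superset hP
  obtain ⟨g, hg, rfl⟩ := hGt b₀ hb₀ b hb
  have hPA : 3 ≤ (P ∩ (xAxis K).image g).card := by
    have hsdiff : P \ (xAxis K).image g ⊆ {g ![d, 1], g ![0, 1]} := fun z hz => by
      have := hPb (mem_sdiff.1 hz).1
      simp only [b₀, image_insert, mem_insert] at this
      rcases this with h | h | h
      · simp [h]
      · simp [h]
      · exact absurd h (mem_sdiff.1 hz).2
    have := card_sdiff_add_card_inter P ((xAxis K).image g)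
    have := (card_le_card hsdiff).trans card_le_two
    omega
  have hAx := image_xAxis_eq (haffine g hg) hPA (by simp [P])
    (by simpa [P, filter_insert, filter_singleton] using card_le_two)
  have hT : (insert ![0, 1] (xAxis K)).card = 5 := by
    rw [card_insert_of_notMem (by simp [mem_xAxis]), card_xAxis, hK]
  have hb_eq : b₀.image g = b₀ := hB.eq_of_superset hT hb hb₀
    (insert_subset (hPb (by simp [P]))
      (hAx ▸ image_subset_image ((subset_insert _ _).trans (subset_insert _ _))))
    (subset_insert _ _)
  have : ![c, 1] ∈ b₀ := hb_eq ▸ hPb (by simp [P])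
  simp [b₀, mem_xAxis, hcd, hc0] at this

end IsSteinerSystem

theorem stmt_16_general {K : Type*} [Field K] [Fintype K] [DecidableEq K]
    (m : ℕ) (hm : 2 ≤ m)
    (G : Subgroup (Equiv.Perm (Fin m → K)))
    (haffine : ∀ g ∈ G, ∃ (σ : K ≃+* K) (f : (Fin m → K) ≃+ (Fin m → K)) (u : Fin m → K),
      (∀ (c : K) (x : Fin m → K), f (c • x) = σ c • f x) ∧
      ∀ x : Fin m → K, (g : Equiv.Perm (Fin m → K)) x = f x + u)
    (htransl : ∀ u : Fin m → K, Equiv.addLeft u ∈ G)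
    (hSLsub : ∀ s ∈ slPerm m K, s ∈ G ∧ s 0 = 0)
    (t k : ℕ) (ht : t = 4 ∨ t = 5) (htk : t < k) (hkv : k < Fintype.card (Fin m → K))
    (B : Finset (Finset (Fin m → K)))
    (hblocks : ∀ b ∈ B, b.card = k)
    (hdesign : ∀ T : Finset (Fin m → K), T.card = t → (B.filter (fun b => T ⊆ b)).card = 1)
    (hGaut : ∀ g ∈ G, ∀ b ∈ B, b.image (⇑g) ∈ B)
    (hGbt : ∀ b₁ ∈ B, ∀ b₂ ∈ B, ∃ g ∈ G, b₁.image (⇑g) = b₂) :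
    False := by
  have hB : IsSteinerSystem t B := hdesign
  have hSL : ∀ s ∈ slPerm m K, s ∈ G := fun s hs => (hSLsub s hs).1
  have hv : Fintype.card (Fin m → K) = Fintype.card K ^ m := by simp
  rcases exists_le_pow_or_small (Fintype.one_lt_card (α := K)) hm ht with
    ⟨r, hr, hrt, hrm⟩ | hsmall
  · exact hB.false_of_le_pow hGaut hGbt haffine htransl hSL hblocks htk hkv hm hr hrt hrm
  have hv' : Fintype.card (Fin m → K) = 4 ∨ Fintype.card (Fin m → K) = 8 ∨
      Fintype.card (Fin m → K) = 9 ∨ Fintype.card (Fin m → K) = 16 ∧ t = 5 := by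
    rcases hsmall with h | h | h | ⟨h, rfl, rfl⟩ <;> simp [hv, h]
  obtain ⟨hv16, rfl⟩ := eq_sixteen_and_eq_six_of_choose_dvd ht htk hkv hv' fun s hs =>
    hB.choose_dvd hblocks hs (by omega)
  obtain ⟨hK, rfl, rfl⟩ : Fintype.card K = 4 ∧ m = 2 ∧ t = 5 := by
    rcases hsmall with h | h | h | h <;> omega
  exact hB.false_of_card_eq_four hK hGaut hGbt haffine htransl hSL hblocks

/-- Let `q = p^a` be a prime power, `m ≥ 2`, `V = GF(q)^m` (so `v = q^m`).
Let `G` be a group of permutations of `V` consisting of affine transformations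
`x ↦ g(x) + u` (`g` an invertible `p`-semilinear map fixing `0`, `u ∈ V`) containing all
translations, such that the stabilizer `G₀` of `0` contains `SL(m,q)` (in its natural
action on `V`) as a normal subgroup. Then there is no non-trivial Steiner 4-design and no
non-trivial Steiner 5-design on `V` admitting `G` as a block-transitive group of
automorphisms. -/
theorem stmt_16 {K : Type*} [Field K] [Fintype K] [DecidableEq K]
    (p a : ℕ) (hp : p.Prime) (ha : 0 < a) (hq : Fintype.card K = p ^ a)
    (m : ℕ) (hm : 2 ≤ m)
    (G : Subgroup (Equiv.Perm (Fin m → K)))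
    (haffine : ∀ g ∈ G, ∃ (σ : K ≃+* K) (f : (Fin m → K) ≃+ (Fin m → K)) (u : Fin m → K),
      (∀ (c : K) (x : Fin m → K), f (c • x) = σ c • f x) ∧
      ∀ x : Fin m → K, (g : Equiv.Perm (Fin m → K)) x = f x + u)
    (htransl : ∀ u : Fin m → K, Equiv.addLeft u ∈ G)
    (hSLsub : ∀ s ∈ slPerm m K, s ∈ G ∧ s 0 = 0)
    (hSLnormal : ∀ g ∈ G, (g : Equiv.Perm (Fin m → K)) 0 = 0 →
      ∀ s ∈ slPerm m K, g * s * g⁻¹ ∈ slPerm m K)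
    (t k : ℕ) (ht : t = 4 ∨ t = 5) (htk : t < k) (hkv : k < Fintype.card (Fin m → K))
    (B : Finset (Finset (Fin m → K)))
    (hblocks : ∀ b ∈ B, b.card = k)
    (hdesign : ∀ T : Finset (Fin m → K), T.card = t → (B.filter (fun b => T ⊆ b)).card = 1)
    (hGaut : ∀ g ∈ G, ∀ b ∈ B, b.image (⇑g) ∈ B)
    (hGbt : ∀ b₁ ∈ B, ∀ b₂ ∈ B, ∃ g ∈ G, b₁.image (⇑g) = b₂) :
    False :=
  stmt_16_general m hm G haffine htransl hSLsub t k ht htk hkv B hblocks hdesign hGaut hGbt
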